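/- Setting p1 = p2 = p3 = 0 (the linear chain case) in the expected Gutman index formula, E(Gut(COC_n)) = 270n³ - 90n² + 95n - 1; setting p1 = 1 gives E(Gut(COC_n)) = 108n³ + 396n² - 229n - 1; and for all n ≥ 2 and all admissible (p1,p2,p3), 108n³ + 396n² - 229n - 1 ≤ E(Gut(COC_n)) ≤ 270n³ - 90n² + 95n - 1 when the coefficient constraints 0 ≤ p1+p2+p3 ≤ 1, pi ≥ 0 hold. -/
import Mathlib

/-- Expected Gutman index of a random cyclooctane chain as a function of p1,p2,p3 and n. -/
noncomputable def EGut (p1 p2 p3 : ℝ) (n : ℕ) : ℝ :=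
  (270 - 162 * p1 - 108 * p2 - 54 * p3) * n ^ 3
    + (486 * p1 + 324 * p2 + 162 * p3 - 90) * n ^ 2
    + (95 - 324 * p1 - 216 * p2 - 108 * p3) * n - 1

theorem expected_Gutman_extremes :
    (∀ n : ℕ, EGut 0 0 0 n = 270 * n ^ 3 - 90 * n ^ 2 + 95 * n - 1) ∧
    (∀ n : ℕ, EGut 1 0 0 n = 108 * n ^ 3 + 396 * n ^ 2 - 229 * n - 1) ∧
    (∀ n : ℕ, 2 ≤ n → ∀ p1 p2 p3 : ℝ, 0 ≤ p1 → 0 ≤ p2 → 0 ≤ p3 →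
      p1 + p2 + p3 ≤ 1 →
      108 * n ^ 3 + 396 * n ^ 2 - 229 * n - 1 ≤ EGut p1 p2 p3 n ∧
        EGut p1 p2 p3 n ≤ 270 * n ^ 3 - 90 * n ^ 2 + 95 * n - 1) := by
  refine ⟨fun n => by simp [EGut]; ring, fun n => by simp [EGut]; ring, ?_⟩
  intro n hn p1 p2 p3 h1 h2 h3 hs
  have hn' : (2 : ℝ) ≤ (n : ℝ) := by exact_mod_cast hn
  have key : (0 : ℝ) ≤ (n : ℝ) * ((n : ℝ) - 1) * ((n : ℝ) - 2) := mul_nonneg (mul_nonneg (by linarith) (by linarith)) (by linarith)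
  constructor <;> simp only [EGut] <;> nlinarith [mul_nonneg h1 key, mul_nonneg h2 key, mul_nonneg h3 key, mul_nonneg (by linarith : (0:ℝ) ≤ 1 - p1 - p2 - p3) key]
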